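/- arXiv:1004.5183 — 3 statements merged into one kernel-verified Lean document; each statement's English description precedes it below -/
import Mathlib

section
/- Every chordal graph is n-monophilic for every n ≥ 1. -/
open SimpleGraph

open Classical in
/-- Number of proper colorings of `G` from list assignment `L`: functions `γ` with
`γ v ∈ L v` for all `v` and `γ v ≠ γ w` for adjacent `v, w`. -/
noncomputable def colCount {V : Type*} [Fintype V] (G : SimpleGraph V) (L : V → Finset ℕ) : ℕ :=
  ((Fintype.piFinset L).filter fun γ => ∀ v w, G.Adj v w → γ v ≠ γ w).card

/-- `G` is `n`-monophilic: the constant assignment `{1,…,n}` minimizes the number of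
list colorings among all `n`-list assignments. -/
def Monophilic {V : Type*} [Fintype V] (G : SimpleGraph V) (n : ℕ) : Prop :=
  ∀ L : V → Finset ℕ, (∀ v, (L v).card = n) →
    colCount G (fun _ => Finset.Icc 1 n) ≤ colCount G L

/-- `G` is chordal: every cycle of length greater than 3 has a chord, i.e. two vertices
of the cycle joined by an edge of `G` that is not an edge of the cycle. -/
def IsChordal {V : Type*} (G : SimpleGraph V) : Prop :=
  ∀ (u : V) (c : G.Walk u u), c.IsCycle → 3 < c.length →
    ∃ x ∈ c.support, ∃ y ∈ c.support, G.Adj x y ∧ s(x, y) ∉ c.edges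

/-!
A chordal graph has a simplicial vertex (Dirac): in a chordal graph a minimum separator of two
non-adjacent vertices is a clique, since otherwise shortest paths between two of its non-adjacent
vertices through the two sides would close up to a chordless cycle of length at least 4; applying
induction to each side together with the separator gives a simplicial vertex on each side.
Deleting a simplicial vertex `v` with `d` neighbours, whose colours are then pairwise distinct,
multiplies the number of `{1, …, n}`-colourings by exactly `n - d` and the number of
`L`-colourings by at least `n - d`, so induction on the number of vertices concludes.
-/

open Finset

theorem IsChordal.comap {V W : Type*} {G : SimpleGraph V} (hG : IsChordal G) (f : W ↪ V) :
    IsChordal (G.comap f) := by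
  intro u c hc hl
  let e : G.comap f ↪g G := Embedding.comap f G
  obtain ⟨x, hx, y, hy, hxy, hne⟩ :=
    hG _ (c.map e.toHom) (hc.map e.injective) (by rwa [Walk.length_map])
  rw [Walk.support_map, List.mem_map] at hx hy
  obtain ⟨x, hx, rfl⟩ := hx
  obtain ⟨y, hy, rfl⟩ := hy
  exact ⟨x, hx, y, hy, hxy, fun h => hne (by rw [Walk.edges_map]; exact List.mem_map_of_mem h)⟩

namespace SimpleGraph.Walk

variable {V : Type*} {G : SimpleGraph V}

theorem exists_shorter_of_isChord [DecidableEq V] {u w : V} (p : G.Walk u w) {x y : V}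
    (hx : x ∈ p.support) (hy : y ∈ p.support) (hxy : G.Adj x y) (hne : s(x, y) ∉ p.edges) :
    ∃ q : G.Walk u w, q.length < p.length ∧ q.support ⊆ p.support := by
  induction p with
  | nil =>
    simp only [support_nil, List.mem_singleton] at hx hy
    exact absurd (hx.trans hy.symm) hxy.ne
  | @cons u v w h p ih =>
    have from_start : ∀ {y}, G.Adj u y → s(u, y) ∉ (cons h p).edges →
        y ∈ (cons h p).support →
        ∃ q : G.Walk u w, q.length < (cons h p).length ∧ q.support ⊆ (cons h p).support := by
      intro y huy hne hy
      have hyv : y ≠ v := by rintro rfl; simp at hne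
      have hy : y ∈ p.support := by
        rw [support_cons, List.mem_cons] at hy
        exact hy.resolve_left huy.ne.symm
      refine ⟨cons huy (p.dropUntil y hy), ?_, ?_⟩
      · simpa using length_dropUntil_lt_length hy hyv
      · simpa using List.Subset.trans (p.support_dropUntil_subset_support hy)
          (List.subset_cons_self _ _)
    rw [support_cons, List.mem_cons] at hx hy
    rcases hx with rfl | hx
    · exact from_start hxy hne (by simp [hy])
    rcases hy with rfl | hy
    · exact from_start hxy.symm (by rwa [Sym2.eq_swap]) (by simp [hx])
    obtain ⟨q, hlt, hsub⟩ := ih hx hy (fun h => hne (by simp [h]))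
    exact ⟨cons h q, by simpa using hlt, List.cons_subset_cons _ hsub⟩

theorem exists_isPath_isChordless [DecidableEq V] {u w : V} (p : G.Walk u w) :
    ∃ q : G.Walk u w, q.IsPath ∧ q.IsChordless ∧ q.support ⊆ p.support := by
  induction h : p.length using Nat.strong_induction_on generalizing p with
  | _ n ih =>
  by_cases hq : p.bypass.IsChordless
  · exact ⟨p.bypass, p.bypass_isPath, hq, p.support_bypass_subset_support⟩
  obtain ⟨x, y, hxy, hne, hx, hy⟩ : ∃ x y, G.Adj x y ∧ s(x, y) ∉ p.bypass.edges ∧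
      x ∈ p.bypass.support ∧ y ∈ p.bypass.support := by
    simpa [isChordless_iff_forall_mem_edges, and_comm, and_assoc, and_left_comm] using hq
  obtain ⟨q, hlt, hsub⟩ := p.bypass.exists_shorter_of_isChord hx hy hxy hne
  obtain ⟨r, hr, hrc, hrsub⟩ := ih q.length (h ▸ hlt.trans_le p.length_bypass_le_length) q rfl
  exact ⟨r, hr, hrc,
    List.Subset.trans hrsub (List.Subset.trans hsub p.support_bypass_subset_support)⟩

end SimpleGraph.Walk

namespace SimpleGraph

variable {V : Type*} {G : SimpleGraph V}

def ReachAvoiding (G : SimpleGraph V) (S : Finset V) (a b : V) : Prop :=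
  ∃ p : G.Walk a b, ∀ x ∈ p.support, x ∉ S

def IsSeparator (G : SimpleGraph V) (S : Finset V) (a b : V) : Prop :=
  a ∉ S ∧ b ∉ S ∧ ¬ G.ReachAvoiding S a b

namespace ReachAvoiding

variable {S : Finset V} {a b c : V}

theorem refl (ha : a ∉ S) : G.ReachAvoiding S a a := ⟨.nil, by simpa⟩

theorem symm : G.ReachAvoiding S a b → G.ReachAvoiding S b a := by
  rintro ⟨p, hp⟩
  exact ⟨p.reverse, by simpa using hp⟩

theorem trans : G.ReachAvoiding S a b → G.ReachAvoiding S b c → G.ReachAvoiding S a c := by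
  rintro ⟨p, hp⟩ ⟨q, hq⟩
  refine ⟨p.append q, fun x hx => ?_⟩
  rcases Walk.mem_support_append_iff p q |>.mp hx with hx | hx
  exacts [hp x hx, hq x hx]

theorem notMem_right : G.ReachAvoiding S a b → b ∉ S := by
  rintro ⟨p, hp⟩
  exact hp b p.end_mem_support

theorem of_adj (h : G.ReachAvoiding S a b) (hbc : G.Adj b c) (hc : c ∉ S) :
    G.ReachAvoiding S a c :=
  h.trans ⟨hbc.toWalk, by simp [h.notMem_right, hc]⟩

theorem of_mem_support [DecidableEq V] {p : G.Walk a b} (hp : ∀ x ∈ p.support, x ∉ S)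
    (hc : c ∈ p.support) : G.ReachAvoiding S a c :=
  ⟨p.takeUntil c hc, fun x hx => hp x (p.support_takeUntil_subset_support hc hx)⟩

theorem exists_adj_of_walk [DecidableEq V] {x s : V} (hax : G.ReachAvoiding S a x)
    (hab : ¬ G.ReachAvoiding S a b) (p : G.Walk x b) (hp : ∀ z ∈ p.support, z ∉ S.erase s) :
    ∃ w, G.Adj s w ∧ G.ReachAvoiding S a w := by
  induction p with
  | nil => exact absurd hax hab
  | @cons x y b h p ih =>
    by_cases hy : y ∈ S
    · obtain rfl : y = s := by
        by_contra hys
        exact hp y (by simp) (mem_erase.2 ⟨hys, hy⟩)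
      exact ⟨x, h.symm, hax⟩
    · exact ih (hax.of_adj h hy) hab (fun z hz => hp z (by simp [hz]))

theorem exists_isPath_isChordless [DecidableEq V] {s t xs xt : V}
    (hxs : G.ReachAvoiding S a xs) (hxt : G.ReachAvoiding S a xt) (hs : G.Adj s xs)
    (ht : G.Adj t xt) : ∃ p : G.Walk s t, p.IsPath ∧ p.IsChordless ∧
      ∀ z ∈ p.support, z = s ∨ z = t ∨ G.ReachAvoiding S a z := by
  obtain ⟨ps, hps⟩ := hxs
  obtain ⟨pt, hpt⟩ := hxt
  obtain ⟨p, hp, hpc, hsub⟩ :=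
    (Walk.cons hs ((ps.reverse.append pt).concat ht.symm)).exists_isPath_isChordless
  refine ⟨p, hp, hpc, fun z hz => ?_⟩
  have := hsub hz
  simp only [Walk.support_cons, Walk.support_concat, Walk.mem_support_append_iff,
    Walk.support_reverse, List.mem_cons, List.mem_append, List.mem_reverse, List.mem_nil_iff,
    or_false] at this
  rcases this with h | (h | h) | h
  · exact .inl h
  · exact .inr (.inr (of_mem_support hps h))
  · exact .inr (.inr (of_mem_support hpt h))
  · exact .inr (.inl h)

end ReachAvoiding

namespace IsSeparator

variable {S : Finset V} {a b : V}

theorem symm (h : G.IsSeparator S a b) : G.IsSeparator S b a :=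
  ⟨h.2.1, h.1, fun h' => h.2.2 h'.symm⟩

theorem exists_adj_of_minimal (hS : G.IsSeparator S a b)
    (hmin : ∀ S', G.IsSeparator S' a b → S.card ≤ S'.card) {u : V} (hu : u ∈ S) :
    ∃ w, G.Adj u w ∧ G.ReachAvoiding S a w := by
  classical
  obtain ⟨p, hp⟩ : G.ReachAvoiding (S.erase u) a b := by
    by_contra h
    have := hmin _
      ⟨fun h' => hS.1 (mem_of_mem_erase h'), fun h' => hS.2.1 (mem_of_mem_erase h'), h⟩
    exact (card_erase_lt_of_mem hu).not_ge this
  exact (ReachAvoiding.refl hS.1).exists_adj_of_walk hS.2.2 p hp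

end IsSeparator

end SimpleGraph

namespace IsChordal

open Walk

variable {V : Type*} {G : SimpleGraph V}

/-- Two chordless `s`-`t` paths whose interiors lie in disjoint, mutually non-adjacent sets
`A` and `B` would close up to a chordless cycle of length at least 4. -/
theorem adj_of_isChordless (hG : IsChordal G) {A B : Set V}
    (hAB : ∀ x ∈ A, ∀ y ∈ B, x ≠ y ∧ ¬ G.Adj x y) {s t : V} (hst : s ≠ t)
    {pA pB : G.Walk s t} (hpA : pA.IsPath) (hpB : pB.IsPath)
    (hcA : pA.IsChordless) (hcB : pB.IsChordless)
    (hA : ∀ z ∈ pA.support, z = s ∨ z = t ∨ z ∈ A)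
    (hB : ∀ z ∈ pB.support, z = s ∨ z = t ∨ z ∈ B) : G.Adj s t := by
  by_contra hnadj
  have hlen : ∀ p : G.Walk s t, 1 < p.length := by
    intro p
    by_contra! h
    interval_cases hp : p.length
    exacts [hst (eq_of_length_eq_zero hp), hnadj (adj_of_length_eq_one hp)]
  have hcommon : ∀ z ∈ pA.support, z ∈ pB.support → z = s ∨ z = t := by
    intro z hzA hzB
    by_contra! ⟨hzs, hzt⟩
    have hzA : z ∈ A := by simpa [hzs, hzt] using hA z hzA
    have hzB : z ∈ B := by simpa [hzs, hzt] using hB z hzB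
    exact (hAB z hzA z hzB).1 rfl
  have start_not_mem : ∀ {u v : V} {p : G.Walk u v}, p.IsPath → u ∉ p.support.tail := by
    intro u v p hp
    have := hp.support_nodup
    rw [← cons_tail_support] at this
    exact (List.nodup_cons.1 this).1
  have hcyc : (pA.append pB.reverse).IsCycle := by
    refine hpA.isCycle_append hpB.reverse (fun z hzA hzB => ?_) (.inl (hlen pA))
    have hzB' : z ∈ pB.support := by
      simpa using List.mem_of_mem_tail hzB
    rcases hcommon z (List.mem_of_mem_tail hzA) hzB' with rfl | rfl
    exacts [start_not_mem hpA hzA, start_not_mem hpB.reverse hzB]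
  obtain ⟨x, hx, y, hy, hxy, hne⟩ :=
    hG s _ hcyc (by have := hlen pA; have := hlen pB; simp; omega)
  simp only [mem_support_append_iff, support_reverse, List.mem_reverse] at hx hy
  simp only [edges_append, edges_reverse, List.mem_append, List.mem_reverse, not_or] at hne
  obtain ⟨hneA, hneB⟩ := hne
  have crossing : ∀ {x y : V}, G.Adj x y → x ∈ pA.support → y ∈ pB.support →
      s(x, y) ∉ pA.edges → s(x, y) ∉ pB.edges → False := by
    intro x y hxy hx hy hneA hneB
    have hxB : x ∉ pB.support := fun hxB => hneB (hcB.mem_edges hxB hy hxy)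
    have hyA : y ∉ pA.support := fun hyA => hneA (hcA.mem_edges hx hyA hxy)
    rcases hA x hx with rfl | rfl | hxA
    · exact hxB pB.start_mem_support
    · exact hxB pB.end_mem_support
    rcases hB y hy with rfl | rfl | hyB
    · exact hyA pA.start_mem_support
    · exact hyA pA.end_mem_support
    exact (hAB x hxA y hyB).2 hxy
  rcases hx with hx | hx <;> rcases hy with hy | hy
  · exact hneA (hcA.mem_edges hx hy hxy)
  · exact crossing hxy hx hy hneA hneB
  · exact crossing hxy.symm hy hx (by rwa [Sym2.eq_swap]) (by rwa [Sym2.eq_swap])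
  · exact hneB (hcB.mem_edges hx hy hxy)

theorem isClique_of_minimal_isSeparator (hG : IsChordal G) {S : Finset V} {a b : V}
    (hS : G.IsSeparator S a b) (hmin : ∀ S', G.IsSeparator S' a b → S.card ≤ S'.card) :
    G.IsClique (S : Set V) := by
  classical
  intro s hs t ht hst
  have hmin' : ∀ S', G.IsSeparator S' b a → S.card ≤ S'.card := fun S' h => hmin S' h.symm
  obtain ⟨pA, hpA, hcA, hA⟩ : ∃ p : G.Walk s t, p.IsPath ∧ p.IsChordless ∧
      ∀ z ∈ p.support, z = s ∨ z = t ∨ G.ReachAvoiding S a z := by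
    obtain ⟨xs, hs, hxs⟩ := hS.exists_adj_of_minimal hmin hs
    obtain ⟨xt, ht, hxt⟩ := hS.exists_adj_of_minimal hmin ht
    exact hxs.exists_isPath_isChordless hxt hs ht
  obtain ⟨pB, hpB, hcB, hB⟩ : ∃ p : G.Walk s t, p.IsPath ∧ p.IsChordless ∧
      ∀ z ∈ p.support, z = s ∨ z = t ∨ G.ReachAvoiding S b z := by
    obtain ⟨xs, hs, hxs⟩ := hS.symm.exists_adj_of_minimal hmin' hs
    obtain ⟨xt, ht, hxt⟩ := hS.symm.exists_adj_of_minimal hmin' ht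
    exact hxs.exists_isPath_isChordless hxt hs ht
  refine hG.adj_of_isChordless (A := {z | G.ReachAvoiding S a z})
    (B := {z | G.ReachAvoiding S b z}) (fun x hx y hy => ⟨?_, fun hxy => ?_⟩) hst hpA hpB
    hcA hcB hA hB
  · rintro rfl
    exact hS.2.2 (hx.trans hy.symm)
  · exact hS.2.2 ((hx.of_adj hxy hy.notMem_right).trans hy.symm)

end IsChordal

namespace SimpleGraph

variable {V W : Type*}

def IsSimplicial (G : SimpleGraph V) (v : V) : Prop :=
  G.IsClique (G.neighborSet v)

theorem IsSimplicial.of_induce {G : SimpleGraph V} {s : Set V} {v : s}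
    (hv : (G.induce s).IsSimplicial v) (hs : G.neighborSet v ⊆ s) : G.IsSimplicial v := by
  intro x hx y hy hxy
  exact @hv ⟨x, hs hx⟩ hx ⟨y, hs hy⟩ hy (fun h => hxy (congrArg Subtype.val h))

theorem exists_isSimplicial_notMem {H : SimpleGraph W} {T : Set W} (hT : H.IsClique T)
    {x : W} (hx : x ∉ T)
    (h : H = ⊤ ∨ ∃ u v, u ≠ v ∧ ¬ H.Adj u v ∧ H.IsSimplicial u ∧ H.IsSimplicial v) :
    ∃ v ∉ T, H.IsSimplicial v := by
  rcases h with rfl | ⟨u, v, huv, hnadj, hu, hv⟩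
  · exact ⟨x, hx, IsClique.top _⟩
  by_cases huT : u ∈ T
  · exact ⟨v, fun hvT => hnadj (hT huT hvT huv), hv⟩
  · exact ⟨u, huT, hu⟩

theorem exists_minimal_isSeparator [Fintype V] (G : SimpleGraph V) {a b : V} (hab : a ≠ b)
    (hnadj : ¬ G.Adj a b) :
    ∃ S, G.IsSeparator S a b ∧ ∀ S', G.IsSeparator S' a b → S.card ≤ S'.card := by
  classical
  have hsep : G.IsSeparator {a, b}ᶜ a b := by
    refine ⟨by simp, by simp, ?_⟩
    rintro ⟨_ | ⟨hay, p⟩, hp⟩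
    · exact hab rfl
    · have := hp _ (List.mem_cons_of_mem _ p.start_mem_support)
      simp only [mem_compl, mem_insert, mem_singleton, not_or, not_and, not_not] at this
      obtain rfl := this hay.ne.symm
      exact hnadj hay
  obtain ⟨S, hS, hmin⟩ := (univ.filter (G.IsSeparator · a b)).exists_min_image card
    ⟨_, mem_filter.2 ⟨mem_univ _, hsep⟩⟩
  exact ⟨S, (mem_filter.1 hS).2, fun S' h => hmin S' (mem_filter.2 ⟨mem_univ _, h⟩)⟩

end SimpleGraph

namespace IsChordal

variable {V : Type*} {G : SimpleGraph V}

/-- Dirac's lemma. -/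
theorem eq_top_or_exists_isSimplicial [Fintype V] (hG : IsChordal G) :
    G = ⊤ ∨ ∃ u v, u ≠ v ∧ ¬ G.Adj u v ∧ G.IsSimplicial u ∧ G.IsSimplicial v := by
  classical
  induction h : Fintype.card V using Nat.strong_induction_on generalizing V with
  | _ n ih =>
  by_cases htop : G = ⊤
  · exact .inl htop
  right
  obtain ⟨a, b, hab, hnadj⟩ : ∃ a b, a ≠ b ∧ ¬ G.Adj a b := by
    by_contra! hadj
    exact htop (by ext a b; rw [top_adj]; exact ⟨Adj.ne, hadj a b⟩)
  obtain ⟨S, hS, hmin⟩ := G.exists_minimal_isSeparator hab hnadj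
  have hSc := hG.isClique_of_minimal_isSeparator hS hmin
  have side : ∀ {c d}, G.IsSeparator S c d →
      ∃ v, G.ReachAvoiding S c v ∧ G.IsSimplicial v := by
    intro c d hcd
    let U : Set V := {z | G.ReachAvoiding S c z ∨ z ∈ S}
    have hlt : Fintype.card U < n :=
      h ▸ Fintype.card_subtype_lt (x := d) (by simp [U, hcd.2.1, hcd.2.2])
    have hSU : (G.induce U).IsClique {z | (z : V) ∈ S} := fun x hx y hy hxy =>
      hSc hx hy (Subtype.coe_ne_coe.2 hxy)
    obtain ⟨v, hvS, hv⟩ := exists_isSimplicial_notMem hSU (x := ⟨c, .inl (.refl hcd.1)⟩)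
      hcd.1 (ih _ hlt (hG.comap _) rfl)
    have hvc : G.ReachAvoiding S c v := v.2.resolve_right hvS
    refine ⟨v, hvc, hv.of_induce fun x hx => ?_⟩
    by_cases hxS : x ∈ S
    · exact .inr hxS
    · exact .inl (hvc.of_adj hx hxS)
  obtain ⟨u, hu, hus⟩ := side hS
  obtain ⟨v, hv, hvs⟩ := side hS.symm
  refine ⟨u, v, ?_, fun huv => ?_, hus, hvs⟩
  · rintro rfl
    exact hS.2.2 (hu.trans hv.symm)
  · exact hS.2.2 ((hu.of_adj huv hv.notMem_right).trans hv.symm)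

theorem exists_isSimplicial [Fintype V] [Nonempty V] (hG : IsChordal G) :
    ∃ v, G.IsSimplicial v := by
  obtain ⟨v, -, hv⟩ := exists_isSimplicial_notMem (T := ∅) isClique_empty
    (Set.notMem_empty (Classical.arbitrary V)) hG.eq_top_or_exists_isSimplicial
  exact ⟨v, hv⟩

end IsChordal

namespace SimpleGraph

variable {V : Type*} [Fintype V]

open Classical in
noncomputable def listColorings (G : SimpleGraph V) (L : V → Finset ℕ) : Finset (V → ℕ) :=
  (Fintype.piFinset L).filter fun γ => ∀ v w, G.Adj v w → γ v ≠ γ w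

theorem colCount_eq_card_listColorings (G : SimpleGraph V) (L : V → Finset ℕ) :
    colCount G L = (G.listColorings L).card :=
  rfl

theorem mem_listColorings {G : SimpleGraph V} {L : V → Finset ℕ} {γ : V → ℕ} :
    γ ∈ G.listColorings L ↔ (∀ v, γ v ∈ L v) ∧ ∀ v w, G.Adj v w → γ v ≠ γ w := by
  simp only [listColorings, mem_filter, Fintype.mem_piFinset]

open Classical in
/-- The colours that a colouring of `G - v` gives to the neighbours of `v`. -/
noncomputable def neighborColors (G : SimpleGraph V) (v : V) (γ : {x // x ≠ v} → ℕ) :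
    Finset ℕ :=
  (univ.filter fun w : {x // x ≠ v} => G.Adj v w).image γ

open Classical in
theorem mem_listColorings_iff_restrict {G : SimpleGraph V} {L : V → Finset ℕ} {v : V}
    {γ : V → ℕ} : γ ∈ G.listColorings L ↔
      (fun x : {x // x ≠ v} => γ x) ∈
          (G.comap (Function.Embedding.subtype _)).listColorings (fun x => L x) ∧
        γ v ∈ L v \ G.neighborColors v (fun x => γ x) := by
  simp only [mem_listColorings, neighborColors, mem_sdiff, mem_image, mem_filter, mem_univ,
    true_and, comap_adj, Function.Embedding.subtype_apply, Subtype.forall, not_exists, not_and]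
  constructor
  · rintro ⟨hL, hadj⟩
    exact ⟨⟨fun x _ => hL x, fun x _ y _ hxy => hadj x y hxy⟩, hL v,
      fun w _ hw => (hadj v w hw).symm⟩
  · rintro ⟨⟨hL, hadj⟩, hv, hvadj⟩
    refine ⟨fun x => ?_, fun x y hxy => ?_⟩
    · by_cases hx : x = v
      exacts [hx ▸ hv, hL x hx]
    · by_cases hx : x = v
      · subst hx
        exact Ne.symm (hvadj y hxy.ne.symm hxy)
      by_cases hy : y = v
      · subst hy
        exact hvadj x hx hxy.symm
      exact hadj x hx y hy hxy

open Classical in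
theorem colCount_eq_sum (G : SimpleGraph V) (L : V → Finset ℕ) (v : V) :
    colCount G L = ∑ γ ∈ (G.comap (Function.Embedding.subtype _)).listColorings
      (fun x : {x // x ≠ v} => L x), (L v \ G.neighborColors v γ).card := by
  classical
  rw [colCount_eq_card_listColorings, ← card_sigma]
  have split : ∀ p : (_ : {x // x ≠ v} → ℕ) × ℕ,
      (Equiv.funSplitAt v ℕ).symm (p.2, p.1) v = p.2 ∧
        (fun x : {x // x ≠ v} => (Equiv.funSplitAt v ℕ).symm (p.2, p.1) x) = p.1 := by
    intro p
    have h := (Equiv.funSplitAt v ℕ).apply_symm_apply (p.2, p.1)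
    rwa [Equiv.funSplitAt_apply, Prod.mk.injEq] at h
  refine card_nbij' (fun γ => ⟨fun x => γ x, γ v⟩)
    (fun p => (Equiv.funSplitAt v ℕ).symm (p.2, p.1)) (fun γ hγ => ?_) (fun p hp => ?_)
    (fun γ _ => (Equiv.funSplitAt v ℕ).symm_apply_apply γ) (fun p _ => ?_)
  · simpa using mem_listColorings_iff_restrict.1 hγ
  · rw [Finset.mem_coe, mem_sigma] at hp
    dsimp only
    rw [Finset.mem_coe, mem_listColorings_iff_restrict (v := v), (split p).1, (split p).2]
    exact hp
  · exact Sigma.ext (split p).2 (heq_of_eq (split p).1)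

open Classical in
theorem card_neighborColors_le (G : SimpleGraph V) (v : V) (γ : {x // x ≠ v} → ℕ) :
    (G.neighborColors v γ).card ≤ (univ.filter fun w : {x // x ≠ v} => G.Adj v w).card :=
  card_image_le

open Classical in
theorem IsSimplicial.card_neighborColors {G : SimpleGraph V} {v : V} (hv : G.IsSimplicial v)
    {L : {x // x ≠ v} → Finset ℕ} {γ : {x // x ≠ v} → ℕ}
    (hγ : γ ∈ (G.comap (Function.Embedding.subtype _)).listColorings L) :
    (G.neighborColors v γ).card = (univ.filter fun w : {x // x ≠ v} => G.Adj v w).card := by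
  refine card_image_of_injOn fun x hx y hy hxy => ?_
  by_contra hne
  simp only [coe_filter, mem_univ, true_and, Set.mem_ofPred_eq] at hx hy
  exact (mem_listColorings.1 hγ).2 x y (hv hx hy (Subtype.coe_ne_coe.2 hne)) hxy

open Classical in
theorem neighborColors_subset {G : SimpleGraph V} {v : V} {L : {x // x ≠ v} → Finset ℕ}
    {c : Finset ℕ} (hL : ∀ x, L x = c) {γ : {x // x ≠ v} → ℕ}
    (hγ : γ ∈ (G.comap (Function.Embedding.subtype _)).listColorings L) :
    G.neighborColors v γ ⊆ c := by
  intro k hk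
  obtain ⟨w, -, rfl⟩ := mem_image.1 hk
  exact hL w ▸ (mem_listColorings.1 hγ).1 w

end SimpleGraph

open Classical in
theorem IsChordal.colCount_Icc_le {V : Type*} [Fintype V] {G : SimpleGraph V}
    (hG : IsChordal G) (n : ℕ) {L : V → Finset ℕ} (hL : ∀ v, (L v).card = n) :
    colCount G (fun _ => Icc 1 n) ≤ colCount G L := by
  induction h : Fintype.card V using Nat.strong_induction_on generalizing V with
  | _ N ih =>
  rcases isEmpty_or_nonempty V with hV | hV
  · rw [Subsingleton.elim L (fun _ => Icc 1 n)]
  obtain ⟨v, hv⟩ := hG.exists_isSimplicial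
  set G' := G.comap (Function.Embedding.subtype fun x => x ≠ v)
  set d := (univ.filter fun w : {x // x ≠ v} => G.Adj v w).card
  have IH : colCount G' (fun _ => Icc 1 n) ≤ colCount G' (fun x => L x) :=
    ih _ (h ▸ Fintype.card_subtype_lt (x := v) (by simp)) (hG.comap _) (fun x => hL x) rfl
  rw [colCount_eq_sum G _ v, colCount_eq_sum G L v]
  calc ∑ γ ∈ G'.listColorings (fun _ => Icc 1 n), (Icc 1 n \ G.neighborColors v γ).card
      = ∑ _γ ∈ G'.listColorings (fun _ => Icc 1 n), (n - d) := sum_congr rfl fun γ hγ => by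
        rw [card_sdiff_of_subset (neighborColors_subset (fun _ => rfl) hγ),
          hv.card_neighborColors hγ, Nat.card_Icc, Nat.add_sub_cancel]
    _ ≤ ∑ _γ ∈ G'.listColorings (fun x => L x), (n - d) := by
        simpa only [sum_const, smul_eq_mul, ← colCount_eq_card_listColorings]
          using Nat.mul_le_mul_right _ IH
    _ ≤ _ := sum_le_sum fun γ _ => by
        have h1 := le_card_sdiff (G.neighborColors v γ) (L v)
        have h2 : (G.neighborColors v γ).card ≤ d := card_neighborColors_le G v γ
        rw [hL v] at h1
        omega

theorem stmt1_general {V : Type*} [Fintype V] (G : SimpleGraph V) (hG : IsChordal G)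
    (n : ℕ) : Monophilic G n :=
  fun _ hL => hG.colCount_Icc_le n hL

theorem stmt1 {V : Type*} [Fintype V] (G : SimpleGraph V) (hG : IsChordal G)
    (n : ℕ) (hn : 1 ≤ n) : Monophilic G n :=
  stmt1_general G hG n
end

section
/- Let n ≥ 2 and k ≥ 1. With A_k and B_k the numbers of proper list-colorings of a path of length k under type A and type B (n,n−1)-list assignments respectively, one has A_k − B_k = (−1)^k. -/
open SimpleGraph

/-- A type A `(n,n-1)`-list assignment for the path with `k+1` vertices: all interior
vertices share a common `n`-list `T`, and both terminal vertices get the same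
`(n-1)`-subset `S` of `T`. -/
def IsTypeA (n k : ℕ) (L : Fin (k + 1) → Finset ℕ) : Prop :=
  ∃ S T : Finset ℕ, S.card = n - 1 ∧ T.card = n ∧ S ⊆ T ∧
    L 0 = S ∧ L (Fin.last k) = S ∧
    ∀ i : Fin (k + 1), i ≠ 0 → i ≠ Fin.last k → L i = T

/-- A type B `(n,n-1)`-list assignment: as in type A, but the two terminal
`(n-1)`-lists are distinct subsets of the common interior `n`-list. -/
def IsTypeB (n k : ℕ) (L : Fin (k + 1) → Finset ℕ) : Prop :=
  ∃ S₁ S₂ T : Finset ℕ, S₁.card = n - 1 ∧ S₂.card = n - 1 ∧ T.card = n ∧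
    S₁ ⊆ T ∧ S₂ ⊆ T ∧ S₁ ≠ S₂ ∧
    L 0 = S₁ ∧ L (Fin.last k) = S₂ ∧
    ∀ i : Fin (k + 1), i ≠ 0 → i ≠ Fin.last k → L i = T

/-!
Colour the path one vertex at a time: the colourings of `m + 2` vertices ending in `c` are the
colourings of the first `m + 1` vertices not ending in `c`. For the lists `S, T, …, T` with
`S ⊆ T` and `|T \ S| = 1`, induction then shows that the number of colourings ending in `c` is
`endCount |T| m` for `c ∈ S` and `endCount |T| m - (-1)^m` for the colour of `T \ S`. Hence a
final list `F ⊆ T` gives `|F| β + |F \ S| (-1)^m` colourings, with `β` depending only on `|T|`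
and `m`; both types have `|F| = n - 1`, while `F \ S` is empty for type A and a single colour
for type B.
-/

open Finset

section PathColorings

variable {α : Type*}

theorem forall_pathGraph_adj_ne_iff {m : ℕ} (γ : Fin (m + 1) → α) :
    (∀ v w, (pathGraph (m + 1)).Adj v w → γ v ≠ γ w) ↔
      ∀ i : Fin m, γ i.castSucc ≠ γ i.succ := by
  refine ⟨fun h i => h _ _ (pathGraph_adj.mpr (Or.inl (by simp))), fun h v w hvw => ?_⟩
  have edge : ∀ v w : Fin (m + 1), v.val + 1 = w.val → γ v ≠ γ w := by
    intro v w hvw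
    have hv : v.val < m := by omega
    simpa [Fin.ext_iff, hvw] using h ⟨v, hv⟩
  rcases pathGraph_adj.mp hvw with hvw | hwv
  · exact edge v w hvw
  · exact (edge w v hwv).symm

def startLists (S T : Finset α) (m : ℕ) : Fin (m + 1) → Finset α :=
  fun i => if i = 0 then S else T

theorem init_startLists (S T : Finset α) (m : ℕ) :
    Fin.init (startLists S T (m + 1)) = startLists S T m := by
  funext i
  simp [startLists, Fin.init]

theorem startLists_last_succ (S T : Finset α) (m : ℕ) :
    startLists S T (m + 1) (Fin.last (m + 1)) = T :=
  if_neg (Fin.last_pos).ne'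

theorem startLists_subset {S T : Finset α} (hST : S ⊆ T) (m : ℕ) (i : Fin (m + 1)) :
    startLists S T m i ⊆ T := by
  unfold startLists
  split_ifs
  exacts [hST, subset_rfl]

theorem init_eq_startLists {S T : Finset α} {m : ℕ} {L : Fin (m + 2) → Finset α}
    (h0 : L 0 = S) (hT : ∀ i, i ≠ 0 → i ≠ Fin.last (m + 1) → L i = T) :
    Fin.init L = startLists S T m := by
  funext i
  by_cases hi : i = 0
  · simp [startLists, Fin.init, hi, h0]
  · simp only [Fin.init, startLists, if_neg hi]
    exact hT _ (by simpa using hi) (Fin.castSucc_lt_last i).ne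

variable [DecidableEq α]

def pathColorings (m : ℕ) (L : Fin (m + 1) → Finset α) : Finset (Fin (m + 1) → α) :=
  (Fintype.piFinset L).filter fun γ => ∀ i : Fin m, γ i.castSucc ≠ γ i.succ

def pathColoringsEndingAt (m : ℕ) (L : Fin (m + 1) → Finset α) (c : α) :
    Finset (Fin (m + 1) → α) :=
  (pathColorings m L).filter fun γ => γ (Fin.last m) = c

theorem colCount_pathGraph (m : ℕ) (L : Fin (m + 1) → Finset ℕ) :
    colCount (pathGraph (m + 1)) L = #(pathColorings m L) := by
  unfold colCount pathColorings
  congr 1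
  ext γ
  simp only [mem_filter, forall_pathGraph_adj_ne_iff]
  convert Iff.rfl

theorem card_pathColorings_eq_sum (m : ℕ) (L : Fin (m + 1) → Finset α) :
    #(pathColorings m L) = ∑ c ∈ L (Fin.last m), #(pathColoringsEndingAt m L c) :=
  card_eq_sum_card_fiberwise fun _ hγ =>
    Fintype.mem_piFinset.mp (mem_filter.mp hγ).1 (Fin.last m)

theorem pathColoringsEndingAt_eq_empty {m : ℕ} {L : Fin (m + 1) → Finset α} {c : α}
    (hc : c ∉ L (Fin.last m)) : pathColoringsEndingAt m L c = ∅ := by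
  refine filter_eq_empty_iff.mpr fun _ hγ hγc => hc ?_
  exact hγc ▸ Fintype.mem_piFinset.mp (mem_filter.mp hγ).1 (Fin.last m)

theorem pathColoringsEndingAt_zero {L : Fin 1 → Finset α} {c : α} (hc : c ∈ L 0) :
    pathColoringsEndingAt 0 L c = {fun _ => c} := by
  ext γ
  simp only [pathColoringsEndingAt, pathColorings, mem_filter, Fintype.mem_piFinset,
    mem_singleton, IsEmpty.forall_iff, and_true]
  constructor
  · rintro ⟨-, rfl⟩
    funext i
    rw [Fin.eq_zero i]; rfl
  · rintro rfl
    exact ⟨fun i => Fin.eq_zero i ▸ hc, rfl⟩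

theorem mem_pathColorings_succ {m : ℕ} {L : Fin (m + 2) → Finset α} {γ : Fin (m + 2) → α} :
    γ ∈ pathColorings (m + 1) L ↔
      Fin.init γ ∈ pathColorings m (Fin.init L) ∧ γ (Fin.last (m + 1)) ∈ L (Fin.last (m + 1)) ∧
        Fin.init γ (Fin.last m) ≠ γ (Fin.last (m + 1)) := by
  simp only [pathColorings, mem_filter, Fin.mem_piFinset_iff_last_init,
    Fin.forall_fin_succ' (n := m), Fin.init, Fin.succ_castSucc, Fin.succ_last]
  tauto

theorem card_pathColoringsEndingAt_succ {m : ℕ} {L : Fin (m + 2) → Finset α} {c : α}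
    (hc : c ∈ L (Fin.last (m + 1))) :
    (#(pathColoringsEndingAt (m + 1) L c) : ℤ) =
      #(pathColorings m (Fin.init L)) - #(pathColoringsEndingAt m (Fin.init L) c) := by
  have snoc_bij : #(pathColoringsEndingAt (m + 1) L c) =
      #{δ ∈ pathColorings m (Fin.init L) | ¬δ (Fin.last m) = c} := by
    refine card_nbij' Fin.init (Fin.snoc · c) ?_ ?_ ?_ ?_
    · intro γ hγ
      simp only [pathColoringsEndingAt, mem_coe, mem_filter,
        mem_pathColorings_succ] at hγ ⊢
      exact ⟨hγ.1.1, hγ.2 ▸ hγ.1.2.2⟩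
    · intro δ hδ
      simp only [pathColoringsEndingAt, mem_coe, mem_filter,
        mem_pathColorings_succ, Fin.init_snoc, Fin.snoc_last, and_true] at hδ ⊢
      exact ⟨hδ.1, hc, hδ.2⟩
    · intro γ hγ
      simp only [pathColoringsEndingAt, mem_coe, mem_filter] at hγ
      exact hγ.2 ▸ Fin.snoc_init_self γ
    · intro δ _
      exact Fin.init_snoc _ _
  rw [snoc_bij, ← card_filter_add_card_filter_not (s := pathColorings m (Fin.init L))
    (· (Fin.last m) = c)]
  unfold pathColoringsEndingAt
  push_cast
  ring

end PathColorings

def endCount (t : ℕ) : ℕ → ℤ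
  | 0 => 1
  | m + 1 => ((t : ℤ) - 1) * endCount t m - (-1) ^ m

section StartLists

variable {α : Type*} [DecidableEq α] {S T : Finset α}

theorem card_pathColorings_startLists (hST : S ⊆ T) (hTS : #(T \ S) = 1) (m : ℕ) {a : ℤ}
    (hS : ∀ c ∈ S, (#(pathColoringsEndingAt m (startLists S T m) c) : ℤ) = a)
    (hT : ∀ c ∈ T \ S, (#(pathColoringsEndingAt m (startLists S T m) c) : ℤ) = a - (-1) ^ m) :
    (#(pathColorings m (startLists S T m)) : ℤ) = #T * a - (-1) ^ m := by
  have sum_over_T : #(pathColorings m (startLists S T m)) =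
      ∑ c ∈ T, #(pathColoringsEndingAt m (startLists S T m) c) := by
    rw [card_pathColorings_eq_sum]
    refine sum_subset (startLists_subset hST m _) fun c _ hc => ?_
    rw [pathColoringsEndingAt_eq_empty hc, card_empty]
  rw [sum_over_T, ← card_sdiff_add_card_eq_card hST, ← sum_sdiff hST]
  push_cast
  rw [sum_congr rfl hT, sum_congr rfl hS, sum_const, sum_const, hTS]
  simp only [nsmul_eq_mul]
  push_cast
  ring

theorem card_pathColoringsEndingAt_startLists (hST : S ⊆ T) (hTS : #(T \ S) = 1) (m : ℕ) :
    (∀ c ∈ S, (#(pathColoringsEndingAt m (startLists S T m) c) : ℤ) = endCount #T m) ∧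
      ∀ c ∈ T \ S, (#(pathColoringsEndingAt m (startLists S T m) c) : ℤ) =
        endCount #T m - (-1) ^ m := by
  induction m with
  | zero =>
    refine ⟨fun c hc => ?_, fun c hc => ?_⟩
    · rw [pathColoringsEndingAt_zero hc, card_singleton]
      rfl
    · rw [pathColoringsEndingAt_eq_empty (mem_sdiff.mp hc).2]
      simp [endCount]
  | succ m ih =>
    have total := card_pathColorings_startLists hST hTS m ih.1 ih.2
    have step : ∀ c ∈ T, (#(pathColoringsEndingAt (m + 1) (startLists S T (m + 1)) c) : ℤ) =
        #(pathColorings m (startLists S T m)) -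
          #(pathColoringsEndingAt m (startLists S T m) c) := fun c hc => by
      rw [card_pathColoringsEndingAt_succ (by rwa [startLists_last_succ]), init_startLists]
    refine ⟨fun c hc => ?_, fun c hc => ?_⟩
    · rw [step c (hST hc), total, ih.1 c hc, endCount]
      ring
    · rw [step c (mem_sdiff.mp hc).1, total, ih.2 c hc, endCount]
      ring

theorem card_pathColorings_of_init_eq_startLists (hST : S ⊆ T) (hTS : #(T \ S) = 1) {m : ℕ}
    {L : Fin (m + 2) → Finset α} (hL : Fin.init L = startLists S T m)
    (hlast : L (Fin.last (m + 1)) ⊆ T) :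
    (#(pathColorings (m + 1) L) : ℤ) =
      #(L (Fin.last (m + 1))) * ((#T - 1) * endCount #T m - (-1) ^ m) +
        #(L (Fin.last (m + 1)) \ S) * (-1) ^ m := by
  obtain ⟨hS, hTS'⟩ := card_pathColoringsEndingAt_startLists hST hTS m
  have total := card_pathColorings_startLists hST hTS m hS hTS'
  set F := L (Fin.last (m + 1))
  have step : ∀ c ∈ F, (#(pathColoringsEndingAt (m + 1) L c) : ℤ) =
      #T * endCount #T m - (-1) ^ m - #(pathColoringsEndingAt m (startLists S T m) c) :=
    fun c hc => by rw [card_pathColoringsEndingAt_succ hc, hL, total]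
  have inS : ∀ c ∈ F ∩ S, (#(pathColoringsEndingAt (m + 1) L c) : ℤ) =
      #T * endCount #T m - (-1) ^ m - endCount #T m := fun c hc => by
    rw [step c (mem_inter.mp hc).1, hS c (mem_inter.mp hc).2]
  have outS : ∀ c ∈ F \ S, (#(pathColoringsEndingAt (m + 1) L c) : ℤ) =
      #T * endCount #T m - (-1) ^ m - (endCount #T m - (-1) ^ m) := fun c hc => by
    obtain ⟨hcF, hcS⟩ := mem_sdiff.mp hc
    rw [step c hcF, hTS' c (mem_sdiff.mpr ⟨hlast hcF, hcS⟩)]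
  rw [card_pathColorings_eq_sum, Nat.cast_sum, ← sum_inter_add_sum_sdiff F S,
    sum_congr rfl inS, sum_congr rfl outS, sum_const, sum_const, ← card_inter_add_card_sdiff F S]
  simp only [nsmul_eq_mul]
  push_cast
  ring

end StartLists

theorem Finset.card_sdiff_eq_one_of_ne {α : Type*} [DecidableEq α] {S₁ S₂ T : Finset α}
    (hS₂T : S₂ ⊆ T) (hTS₁ : #(T \ S₁) = 1) (hcard : #S₁ = #S₂) (hne : S₁ ≠ S₂) :
    #(S₂ \ S₁) = 1 := by
  have hle : #(S₂ \ S₁) ≤ 1 := hTS₁ ▸ card_le_card (sdiff_subset_sdiff hS₂T subset_rfl)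
  have hpos : 0 < #(S₂ \ S₁) := by
    refine card_pos.mpr (nonempty_iff_ne_empty.mpr fun h => hne ?_)
    exact (eq_of_subset_of_card_le (sdiff_eq_empty_iff_subset.mp h) hcard.le).symm
  omega

theorem stmt5 (n k : ℕ) (hn : 2 ≤ n) (hk : 1 ≤ k)
    (LA LB : Fin (k + 1) → Finset ℕ) (hLA : IsTypeA n k LA) (hLB : IsTypeB n k LB) :
    (colCount (pathGraph (k + 1)) LA : ℤ) - colCount (pathGraph (k + 1)) LB = (-1) ^ k := by
  obtain ⟨m, rfl⟩ : ∃ m, k = m + 1 := ⟨k - 1, by omega⟩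
  obtain ⟨S, T, hS, hT, hST, hA0, hAl, hAi⟩ := hLA
  obtain ⟨S₁, S₂, T', hS₁, hS₂, hT', hS₁T, hS₂T, hne, hB0, hBl, hBi⟩ := hLB
  have hTS : #(T \ S) = 1 := by rw [card_sdiff_of_subset hST, hS, hT]; omega
  have hTS₁ : #(T' \ S₁) = 1 := by rw [card_sdiff_of_subset hS₁T, hS₁, hT']; omega
  have hA := card_pathColorings_of_init_eq_startLists hST hTS (init_eq_startLists hA0 hAi)
    (hAl ▸ hST)
  have hB := card_pathColorings_of_init_eq_startLists hS₁T hTS₁ (init_eq_startLists hB0 hBi)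
    (hBl ▸ hS₂T)
  rw [colCount_pathGraph, colCount_pathGraph, hA, hB, hAl, hBl, hT, hT', Finset.sdiff_self,
    card_sdiff_eq_one_of_ne hS₂T hTS₁ (hS₁.trans hS₂.symm) hne, hS, hS₂, card_empty]
  push_cast
  ring
end

section
/- For an even cycle C of length k ≥ 4, the 2-list assignment L that assigns {1,2} to two adjacent vertices and {2,3} to all remaining vertices satisfies col(C,L) = 2 = col(C,2); thus even cycles have minimizing 2-list assignments that are not constant. -/
open SimpleGraph

/-!
A proper colouring of a path whose vertices all carry the same two-element list alternates, so
it is determined by its colour at the first vertex. With the constant list `{1, 2}` this leaves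
the two alternating colourings of the even cycle. With the mixed lists, the vertices `2, …, k-1`
alternate between `2` and `3`; as `k` is even, vertices `2` and `k-1` get different colours, and
whichever of them gets `2` forces the colours of its neighbour among `0, 1` and then of the other.
Again exactly two colourings remain.
-/

theorem Finset.eq_iff_ne_of_card_eq_two {α : Type*} {s : Finset α} (hs : s.card = 2)
    {x y z : α} (hx : x ∈ s) (hy : y ∈ s) (hz : z ∈ s) (hyz : y ≠ z) : x = z ↔ x ≠ y := by
  classical
  obtain ⟨a, b, hab, rfl⟩ := Finset.card_eq_two.mp hs
  simp only [Finset.mem_insert, Finset.mem_singleton] at hx hy hz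
  grind

theorem Finset.eq_of_card_eq_two_of_eq_iff {α : Type*} {s : Finset α} (hs : s.card = 2)
    {x y z : α} (hx : x ∈ s) (hy : y ∈ s) (hz : z ∈ s) (h : x = z ↔ y = z) : x = y := by
  classical
  obtain ⟨a, b, hab, rfl⟩ := Finset.card_eq_two.mp hs
  simp only [Finset.mem_insert, Finset.mem_singleton] at hx hy hz
  grind

section PathColoring

variable {α : Type*} {k m : ℕ} {s : Finset α} {γ δ : Fin k → α}

def IsPathColoringFrom (s : Finset α) (m : ℕ) (γ : Fin k → α) : Prop :=
  (∀ i : Fin k, m ≤ i.val → γ i ∈ s) ∧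
    ∀ i j : Fin k, m ≤ i.val → i.val + 1 = j.val → γ i ≠ γ j

theorem IsPathColoringFrom.eq_iff_even (hs : s.card = 2) (hγ : IsPathColoringFrom s m γ)
    {i j : Fin k} (hi : m ≤ i.val) (hj : m ≤ j.val) : γ i = γ j ↔ Even (i.val + j.val) := by
  wlog hij : i ≤ j generalizing i j
  · rw [eq_comm, add_comm]
    exact this hj hi (le_of_not_ge hij)
  obtain ⟨d, hd⟩ := Nat.exists_eq_add_of_le (Fin.le_def.mp hij)
  induction d generalizing j with
  | zero => simp [Fin.ext (hd.trans (Nat.add_zero _))]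
  | succ d ih =>
    let j' : Fin k := ⟨i.val + d, by omega⟩
    have hj' : m ≤ j'.val := le_trans hi (Nat.le_add_right _ _)
    rw [Finset.eq_iff_ne_of_card_eq_two hs (hγ.1 i hi) (hγ.1 j' hj') (hγ.1 j hj)
      (hγ.2 j' j hj' (by simp [j', hd]; omega)), ne_eq, ih hj' (Fin.le_def.mpr (by simp [j'])) rfl,
      hd]
    exact Nat.even_add_one.symm

theorem IsPathColoringFrom.eq_of_eq (hs : s.card = 2) (hγ : IsPathColoringFrom s m γ)
    (hδ : IsPathColoringFrom s m δ) {i₀ : Fin k} (hi₀ : i₀.val = m) (h : γ i₀ = δ i₀)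
    {i : Fin k} (hi : m ≤ i.val) : γ i = δ i := by
  refine Finset.eq_of_card_eq_two_of_eq_iff hs (hγ.1 i hi) (hδ.1 i hi) (hγ.1 i₀ hi₀.ge) ?_
  rw [hγ.eq_iff_even hs hi hi₀.ge, h, hδ.eq_iff_even hs hi hi₀.ge]

end PathColoring

section CycleGraph

variable {k : ℕ}

theorem cycleGraph_adj_of_val_add_one_eq {i j : Fin k} (h : i.val + 1 = j.val) :
    (cycleGraph k).Adj i j :=
  pathGraph_le_cycleGraph (pathGraph_adj.mpr (Or.inl h))

theorem cycleGraph_adj_last_zero (hk : 2 ≤ k) :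
    (cycleGraph k).Adj ⟨k - 1, by omega⟩ ⟨0, by omega⟩ := by
  rw [cycleGraph_adj']
  right
  rw [Fin.val_sub, Nat.sub_sub_self (by omega : 1 ≤ k)]
  exact Nat.mod_eq_of_lt (show 1 + 0 < k by omega)

theorem cycleGraph_even_iff_not_even_of_adj (hk : Even k) {u v : Fin k}
    (h : (cycleGraph k).Adj u v) : Even u.val ↔ ¬Even v.val := by
  have : decide (u.val % 2 = 0) ≠ decide (v.val % 2 = 0) :=
    (cycleGraph.bicoloring_of_even k hk).valid h
  rw [Nat.even_iff, Nat.even_iff]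
  simp only [ne_eq, decide_eq_decide] at this
  omega

end CycleGraph

def IsListColoring {V α : Type*} (G : SimpleGraph V) (L : V → Finset α) (γ : V → α) : Prop :=
  (∀ v, γ v ∈ L v) ∧ ∀ v w, G.Adj v w → γ v ≠ γ w

theorem colCount_eq_two {V : Type*} [Fintype V] {G : SimpleGraph V} {L : V → Finset ℕ}
    {c₁ c₂ : V → ℕ} (hc₁ : IsListColoring G L c₁) (hc₂ : IsListColoring G L c₂) (hne : c₁ ≠ c₂)
    (h : ∀ γ, IsListColoring G L γ → γ = c₁ ∨ γ = c₂) : colCount G L = 2 := by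
  classical
  rw [colCount, Finset.card_eq_two]
  refine ⟨c₁, c₂, hne, Finset.ext fun γ => ?_⟩
  rw [Finset.mem_filter, Fintype.mem_piFinset, Finset.mem_insert, Finset.mem_singleton]
  exact ⟨h γ, by rintro (rfl | rfl); exacts [hc₁, hc₂]⟩

theorem IsListColoring.isPathColoringFrom {α : Type*} {k m : ℕ} {L : Fin k → Finset α}
    {s : Finset α} {γ : Fin k → α} (hγ : IsListColoring (cycleGraph k) L γ)
    (hL : ∀ i : Fin k, m ≤ i.val → L i = s) :
    IsPathColoringFrom s m γ :=
  ⟨fun i hi => hL i hi ▸ hγ.1 i,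
    fun _ _ _ hij => hγ.2 _ _ (cycleGraph_adj_of_val_add_one_eq hij)⟩

theorem IsListColoring.eq_of_eq_at {α : Type*} {k m : ℕ} {L : Fin k → Finset α}
    {s : Finset α} (hs : s.card = 2) (hL : ∀ i : Fin k, m ≤ i.val → L i = s) {γ δ : Fin k → α}
    (hγ : IsListColoring (cycleGraph k) L γ) (hδ : IsListColoring (cycleGraph k) L δ)
    {i₀ : Fin k} (hi₀ : i₀.val = m) (h : γ i₀ = δ i₀) {i : Fin k} (hi : m ≤ i.val) : γ i = δ i :=
  (hγ.isPathColoringFrom hL).eq_of_eq hs (hδ.isPathColoringFrom hL) hi₀ h hi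

theorem IsListColoring.eq_of_forall_val_le {α : Type*} {k m : ℕ} {L : Fin k → Finset α}
    {s : Finset α} (hs : s.card = 2) (hL : ∀ i : Fin k, m ≤ i.val → L i = s) {γ δ : Fin k → α}
    (hγ : IsListColoring (cycleGraph k) L γ) (hδ : IsListColoring (cycleGraph k) L δ)
    (h : ∀ i : Fin k, i.val ≤ m → γ i = δ i) : γ = δ := by
  funext i
  by_cases hi : i.val ≤ m
  · exact h i hi
  · let i₀ : Fin k := ⟨m, by omega⟩
    exact hγ.eq_of_eq_at hs hL hδ (i₀ := i₀) rfl (h i₀ le_rfl) (by omega)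

def alternatingColoring {k : ℕ} (a b : ℕ) (i : Fin k) : ℕ := if Even i.val then a else b

theorem isListColoring_alternatingColoring {k : ℕ} (hke : Even k) {a b : ℕ} (hab : a ≠ b) :
    IsListColoring (cycleGraph k) (fun _ => {a, b}) (alternatingColoring a b) := by
  refine ⟨fun i => ?_, fun u v huv => ?_⟩
  · unfold alternatingColoring; split_ifs <;> simp
  · have := cycleGraph_even_iff_not_even_of_adj hke huv
    unfold alternatingColoring; split_ifs <;> tauto

theorem colCount_cycleGraph_pair {k : ℕ} (hk : k ≠ 0) (hke : Even k) {a b : ℕ} (hab : a ≠ b) :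
    colCount (cycleGraph k) (fun _ => {a, b}) = 2 := by
  have hba : IsListColoring (cycleGraph k) (fun _ => {a, b}) (alternatingColoring b a) := by
    simpa only [Finset.pair_comm] using isListColoring_alternatingColoring hke hab.symm
  let i₀ : Fin k := ⟨0, Nat.pos_of_ne_zero hk⟩
  refine colCount_eq_two (isListColoring_alternatingColoring hke hab) hba
    (fun h => hab (congrFun h i₀)) fun γ hγ => ?_
  have hagree (δ) (hδ : IsListColoring (cycleGraph k) (fun _ => {a, b}) δ) (h : γ i₀ = δ i₀) :
      γ = δ :=
    funext fun i => hγ.eq_of_eq_at (Finset.card_pair hab) (fun _ _ => rfl) hδ rfl h i.val.zero_le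
  rcases (by simpa using hγ.1 i₀ : γ i₀ = a ∨ γ i₀ = b) with h | h
  · exact .inl (hagree _ (isListColoring_alternatingColoring hke hab)
      (by simp [h, alternatingColoring, i₀]))
  · exact .inr (hagree _ hba (by simp [h, alternatingColoring, i₀]))

def twoPairLists {k : ℕ} (a b c : ℕ) (i : Fin k) : Finset ℕ :=
  if i.val ≤ 1 then {a, b} else {b, c}

theorem isListColoring_twoPairLists_left {k : ℕ} (hke : Even k) {a b c : ℕ} (hab : a ≠ b)
    (hbc : b ≠ c) :
    IsListColoring (cycleGraph k) (twoPairLists a b c)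
      (fun i => if i.val = 1 then a else if Even i.val then b else c) := by
  refine ⟨fun i => ?_, fun u v huv => ?_⟩
  · simp only [twoPairLists, Nat.even_iff]
    split_ifs <;> first | omega | simp
  · have := cycleGraph_even_iff_not_even_of_adj hke huv
    simp only [Nat.even_iff] at this ⊢
    split_ifs <;> omega

theorem isListColoring_twoPairLists_right {k : ℕ} (hke : Even k) {a b c : ℕ} (hab : a ≠ b)
    (hbc : b ≠ c) :
    IsListColoring (cycleGraph k) (twoPairLists a b c)
      (fun i => if i.val = 0 then a else if Even i.val then c else b) := by
  refine ⟨fun i => ?_, fun u v huv => ?_⟩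
  · simp only [twoPairLists, Nat.even_iff]
    split_ifs <;> first | omega | simp
  · have := cycleGraph_even_iff_not_even_of_adj hke huv
    simp only [Nat.even_iff] at this ⊢
    split_ifs <;> omega

theorem colCount_cycleGraph_twoPairLists {k : ℕ} (hk : 4 ≤ k) (hke : Even k) {a b c : ℕ}
    (hab : a ≠ b) (hbc : b ≠ c) : colCount (cycleGraph k) (twoPairLists a b c) = 2 := by
  have hc₁ := isListColoring_twoPairLists_left hke hab hbc
  have hc₂ := isListColoring_twoPairLists_right hke hab hbc
  let v₀ : Fin k := ⟨0, by omega⟩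
  let v₁ : Fin k := ⟨1, by omega⟩
  let v₂ : Fin k := ⟨2, by omega⟩
  let vₗ : Fin k := ⟨k - 1, by omega⟩
  refine colCount_eq_two hc₁ hc₂ (fun h => hab (congrFun h v₀).symm) fun γ hγ => ?_
  have hL : ∀ i : Fin k, 2 ≤ i.val → twoPairLists a b c i = {b, c} := fun _ hi => if_neg (by omega)
  have hext (δ) (hδ : IsListColoring (cycleGraph k) (twoPairLists a b c) δ) (h₀ : γ v₀ = δ v₀)
      (h₁ : γ v₁ = δ v₁) (h₂ : γ v₂ = δ v₂) : γ = δ := by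
    refine hγ.eq_of_forall_val_le (Finset.card_pair hbc) hL hδ fun i hi => ?_
    rcases i with ⟨_ | _ | _ | i, hi'⟩
    exacts [h₀, h₁, h₂, absurd hi (by simp only; omega)]
  have h₀₁ : γ v₀ ≠ γ v₁ := hγ.2 _ _ (cycleGraph_adj_of_val_add_one_eq rfl)
  have h₁₂ : γ v₁ ≠ γ v₂ := hγ.2 _ _ (cycleGraph_adj_of_val_add_one_eq rfl)
  have hₗ₀ : γ vₗ ≠ γ v₀ := hγ.2 _ _ (cycleGraph_adj_last_zero (by omega))
  have hₗ₂ : γ vₗ ≠ γ v₂ := by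
    rw [Ne, (hγ.isPathColoringFrom hL).eq_iff_even (Finset.card_pair hbc)
      (by simp only [vₗ]; omega) le_rfl]
    obtain ⟨r, hr⟩ := hke
    simp only [vₗ, v₂, Nat.even_iff]
    omega
  have m₀ : γ v₀ = a ∨ γ v₀ = b := by simpa [twoPairLists, v₀] using hγ.1 v₀
  have m₁ : γ v₁ = a ∨ γ v₁ = b := by simpa [twoPairLists, v₁] using hγ.1 v₁
  have m₂ : γ v₂ = b ∨ γ v₂ = c := by simpa [twoPairLists, v₂] using hγ.1 v₂
  have mₗ : γ vₗ = b ∨ γ vₗ = c := by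
    simpa [twoPairLists, vₗ, show ¬k ≤ 2 by omega] using hγ.1 vₗ
  rcases m₂ with h₂ | h₂
  · have g₁ : γ v₁ = a := by omega
    have g₀ : γ v₀ = b := by omega
    refine .inl (hext _ hc₁ ?_ ?_ ?_) <;> simp only [g₀, g₁, h₂] <;> simp [v₀, v₁, v₂]
  · have g₀ : γ v₀ = a := by omega
    have g₁ : γ v₁ = b := by omega
    refine .inr (hext _ hc₂ ?_ ?_ ?_) <;> simp only [g₀, g₁, h₂] <;> simp [v₀, v₁, v₂]

theorem stmt10 (k : ℕ) (hk : 4 ≤ k) (hke : Even k) :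
    colCount (cycleGraph k)
        (fun i : Fin k => if i.val ≤ 1 then ({1, 2} : Finset ℕ) else {2, 3}) = 2 ∧
      colCount (cycleGraph k) (fun _ => ({1, 2} : Finset ℕ)) = 2 :=
  ⟨colCount_cycleGraph_twoPairLists hk hke (by decide) (by decide),
    colCount_cycleGraph_pair (by omega) hke (by decide)⟩
end
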